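/- arXiv:1703.06090 — 6 statements merged into one kernel-verified Lean document; each statement's English description precedes it below -/
import Mathlib

section
/- Let p ∈ [1/2, 1) and q := 1 − p. Then every element of M_p has a unique representation: if b, b' : ℕ → {0,1} are finitely supported, not identically zero, and Σ_{i∈ℕ} b_i p q^{i−1} = Σ_{i∈ℕ} b'_i p q^{i−1}, then b_i = b'_i for all i ∈ ℕ. -/
private lemma aux_contra
    (p q : ℝ) (hp : 1 / 2 ≤ p) (hp1 : p < 1) (hq : q = 1 - p)
    (b b' : ℕ → ℕ)
    (hb'01 : ∀ i, b' i = 0 ∨ b' i = 1)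
    (hbfin : (Function.support b).Finite) (hb'fin : (Function.support b').Finite)
    (hsum : ∑' i : ℕ, (b i : ℝ) * (p * q ^ i) = ∑' i : ℕ, (b' i : ℝ) * (p * q ^ i))
    (n : ℕ) (hbn : b n = 1) (hb'n : b' n = 0)
    (hlt : ∀ j, j < n → b j = b' j) : False := by
  have hp0 : (0:ℝ) < p := lt_of_lt_of_le (by norm_num) hp
  have hq0 : (0:ℝ) < q := by rw [hq]; linarith
  have hq1 : q < 1 := by rw [hq]; linarith
  have hqp : q ≤ p := by rw [hq]; linarith
  set f : ℕ → ℝ := fun i => (b i : ℝ) * (p * q ^ i) with hf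
  set g : ℕ → ℝ := fun i => (b' i : ℝ) * (p * q ^ i) with hg
  have hfnn : ∀ i, 0 ≤ f i := fun i => by
    positivity
  have hgnn : ∀ i, 0 ≤ g i := fun i => by
    positivity
  have hsf : Summable f := by
    apply summable_of_ne_finset_zero (s := hbfin.toFinset)
    intro i hi
    simp only [Set.Finite.mem_toFinset, Function.mem_support, not_not] at hi
    simp [hf, hi]
  have hsg : Summable g := by
    apply summable_of_ne_finset_zero (s := hb'fin.toFinset)
    intro i hi
    simp only [Set.Finite.mem_toFinset, Function.mem_support, not_not] at hi
    simp [hg, hi]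
  -- subtract equal prefixes
  have hpre : ∑ j ∈ Finset.range n, f j = ∑ j ∈ Finset.range n, g j := by
    apply Finset.sum_congr rfl
    intro j hj
    simp only [Finset.mem_range] at hj
    simp [hf, hg, hlt j hj]
  have h1 := Summable.sum_add_tsum_nat_add n hsf
  have h2 := Summable.sum_add_tsum_nat_add n hsg
  have htail : ∑' j, f (j + n) = ∑' j, g (j + n) := by
    have := h1.trans (hsum.trans h2.symm)
    rw [hpre] at this
    linarith
  -- lower bound for the f-tail
  have hsf' : Summable fun j => f (j + n) := (summable_nat_add_iff n).mpr hsf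
  have hsg' : Summable fun j => g (j + n) := (summable_nat_add_iff n).mpr hsg
  have hlow : p * q ^ n ≤ ∑' j, f (j + n) := by
    have := Summable.le_tsum hsf' 0 (fun j _ => hfnn (j + n))
    simpa [hf, hbn] using this
  -- upper bound for the g-tail
  have hzero : ∑' j, g (j + n) = ∑' j, g (j + 1 + n) := by
    rw [Summable.tsum_eq_zero_add hsg']
    simp [hg, hb'n]
  -- a far-out index where b' vanishes
  obtain ⟨N, hN⟩ := hb'fin.bddAbove
  have hb'big : ∀ m : ℕ, N < m → b' m = 0 := by
    intro m hm
    by_contra h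
    exact absurd (hN (Function.mem_support.mpr h)) (by exact_mod_cast not_le.mpr hm)
  have hupper : ∑' j, g (j + 1 + n) < ∑' j : ℕ, p * q ^ (j + 1 + n) := by
    apply Summable.tsum_lt_tsum_of_nonneg (i := N + 1) (fun j => hgnn _)
    · intro j
      have hb' : (b' (j + 1 + n) : ℝ) ≤ 1 := by
        rcases hb'01 (j + 1 + n) with h | h <;> simp [h]
      have : (b' (j + 1 + n) : ℝ) * (p * q ^ (j + 1 + n)) ≤ 1 * (p * q ^ (j + 1 + n)) := by
        apply mul_le_mul_of_nonneg_right hb'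
        positivity
      simpa [hg] using this
    · have : b' (N + 1 + 1 + n) = 0 := hb'big _ (by omega)
      simp only [hg, this, Nat.cast_zero, zero_mul]
      positivity
    · have : Summable fun j : ℕ => (p * q ^ (1 + n)) * q ^ j := by
        apply Summable.mul_left
        exact summable_geometric_of_lt_one hq0.le hq1
      apply this.congr
      intro j
      rw [pow_add, pow_add]
      ring
  have hgeom : ∑' j : ℕ, p * q ^ (j + 1 + n) = q ^ (n + 1) := by
    have h1 : ∀ j : ℕ, p * q ^ (j + 1 + n) = (p * q ^ (1 + n)) * q ^ j := by
      intro j; rw [pow_add, pow_add]; ring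
    rw [tsum_congr h1, tsum_mul_left, tsum_geometric_of_lt_one hq0.le hq1]
    have : (1 - q) = p := by rw [hq]; ring
    rw [this]
    field_simp
    ring_nf
  have hfin : q ^ (n + 1) ≤ p * q ^ n := by
    rw [pow_succ, mul_comm]
    apply mul_le_mul_of_nonneg_right hqp
    positivity
  have : p * q ^ n < p * q ^ n := by
    calc p * q ^ n ≤ ∑' j, f (j + n) := hlow
      _ = ∑' j, g (j + n) := htail
      _ = ∑' j, g (j + 1 + n) := hzero
      _ < ∑' j : ℕ, p * q ^ (j + 1 + n) := hupper
      _ = q ^ (n + 1) := hgeom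
      _ ≤ p * q ^ n := hfin
  exact lt_irrefl _ this

/-- For `p ∈ [1/2, 1)` and `q = 1 - p`, every element of
`M_p = { ∑_i b_i p q^(i-1) : b finitely supported 0-1 sequence, not identically zero }`
has a unique representation. Here the sequence is indexed by `i : ℕ` (shifting the
paper's index `i ∈ {1,2,...}` down by one, so the summand is `b i * p * q ^ i`). -/
theorem unique_representation_of_half_le
    (p q : ℝ) (hp : 1 / 2 ≤ p) (hp1 : p < 1) (hq : q = 1 - p)
    (b b' : ℕ → ℕ)
    (hb01 : ∀ i, b i = 0 ∨ b i = 1) (hb'01 : ∀ i, b' i = 0 ∨ b' i = 1)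
    (hbfin : (Function.support b).Finite) (hb'fin : (Function.support b').Finite)
    (hbne : ∃ i, b i = 1) (hb'ne : ∃ i, b' i = 1)
    (hsum : ∑' i : ℕ, (b i : ℝ) * (p * q ^ i) = ∑' i : ℕ, (b' i : ℝ) * (p * q ^ i)) :
    ∀ i, b i = b' i := by
  by_contra h
  push_neg at h
  have hex : ∃ n, b n ≠ b' n := h
  classical
  let n := Nat.find hex
  have hne : b n ≠ b' n := Nat.find_spec hex
  have hlt : ∀ j, j < n → b j = b' j := fun j hj => by
    by_contra hc
    exact absurd hj (not_lt.mpr (Nat.find_le hc))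
  rcases hb01 n with h0 | h1
  · rcases hb'01 n with h0' | h1'
    · exact hne (h0.trans h0'.symm)
    · exact aux_contra p q hp hp1 hq b' b hb01 hb'fin hbfin hsum.symm n h1' h0
        (fun j hj => (hlt j hj).symm)
  · rcases hb'01 n with h0' | h1'
    · exact aux_contra p q hp hp1 hq b b' hb'01 hbfin hb'fin hsum n h1 h0' hlt
    · exact hne (h1.trans h1'.symm)
end

section
/- Let p ∈ (0,1) be transcendental over ℚ and q := 1 − p. Then every element of M_p has a unique representation: if b, b' : ℕ → {0,1} are finitely supported, not identically zero, and Σ_{i∈ℕ} b_i p q^{i−1} = Σ_{i∈ℕ} b'_i p q^{i−1}, then b_i = b'_i for all i ∈ ℕ. -/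
/-!
Since `q = 1 - p` is transcendental along with `p`, the powers of `q` are linearly independent
over `ℚ`, hence over `ℕ`. Cancelling `p ≠ 0` from both sums leaves two `ℕ`-linear combinations
of powers of `q` that agree, so their coefficients agree.
-/

section Transcendental

variable {R A : Type*} [CommRing R] [CommRing A] [Algebra R A] {x : A}

theorem Transcendental.ne_zero [Nontrivial R] (hx : Transcendental R x) : x ≠ 0 :=
  fun h ↦ hx (h ▸ isAlgebraic_zero)

theorem Transcendental.one_sub [IsDomain R] (hx : Transcendental R x) :
    Transcendental R (1 - x) :=
  fun h ↦ hx (by simpa using isAlgebraic_one.sub h)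

open Polynomial in
theorem Transcendental.linearIndependent_pow (hx : Transcendental R x) :
    LinearIndependent R (x ^ · : ℕ → A) := by
  refine linearIndependent_iff'.2 fun s c hc i hi ↦ ?_
  have hP : ∑ j ∈ s, monomial j (c j) = 0 := by
    refine transcendental_iff.1 hx _ ?_
    simpa [aeval_monomial, Algebra.smul_def] using hc
  simpa [finsetSum_coeff, coeff_monomial, hi] using congr_arg (coeff · i) hP

end Transcendental

theorem LinearIndependent.eq_of_tsum_smul_eq {ι R M : Type*} [Semiring R] [AddCommMonoid M]
    [Module R M] [TopologicalSpace M] {v : ι → M} (hv : LinearIndependent R v) {c c' : ι → R}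
    (hc : c.support.Finite) (hc' : c'.support.Finite)
    (h : ∑' i, c i • v i = ∑' i, c' i • v i) : c = c' := by
  classical
  set s := hc.toFinset ∪ hc'.toFinset
  rw [tsum_eq_sum (s := s) (fun i hi ↦ by simp_all [s]),
    tsum_eq_sum (s := s) (fun i hi ↦ by simp_all [s])] at h
  funext i
  by_cases hi : i ∈ s
  · exact linearIndependent_iff'ₛ.1 hv s c c' h i hi
  · simp_all [s]

theorem unique_representation_of_transcendental_general
    (p q : ℝ) (hptr : Transcendental ℚ p) (hq : q = 1 - p)
    (b b' : ℕ → ℕ)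
    (hbfin : (Function.support b).Finite) (hb'fin : (Function.support b').Finite)
    (hsum : ∑' i : ℕ, (b i : ℝ) * (p * q ^ i) = ∑' i : ℕ, (b' i : ℝ) * (p * q ^ i)) :
    ∀ i, b i = b' i := by
  have hind : LinearIndependent ℕ (q ^ · : ℕ → ℝ) :=
    (hq ▸ hptr.one_sub).linearIndependent_pow.restrict_scalars' ℕ
  have hsum' : ∑' i, b i • q ^ i = ∑' i, b' i • q ^ i := by
    simp only [nsmul_eq_mul]
    refine mul_left_cancel₀ hptr.ne_zero ?_
    simpa only [← tsum_mul_left, mul_left_comm] using hsum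
  exact congrFun (hind.eq_of_tsum_smul_eq hbfin hb'fin hsum')

/-- For `p ∈ (0,1)` transcendental over ℚ and `q = 1 - p`, every element of
`M_p = { ∑_i b_i p q^(i-1) : b finitely supported 0-1 sequence, not identically zero }`
has a unique representation. Here the sequence is indexed by `i : ℕ` (shifting the
paper's index `i ∈ {1,2,...}` down by one, so the summand is `b i * p * q ^ i`). -/
theorem unique_representation_of_transcendental
    (p q : ℝ) (hp0 : 0 < p) (hp1 : p < 1) (hptr : Transcendental ℚ p) (hq : q = 1 - p)
    (b b' : ℕ → ℕ)
    (hb01 : ∀ i, b i = 0 ∨ b i = 1) (hb'01 : ∀ i, b' i = 0 ∨ b' i = 1)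
    (hbfin : (Function.support b).Finite) (hb'fin : (Function.support b').Finite)
    (hbne : ∃ i, b i = 1) (hb'ne : ∃ i, b' i = 1)
    (hsum : ∑' i : ℕ, (b i : ℝ) * (p * q ^ i) = ∑' i : ℕ, (b' i : ℝ) * (p * q ^ i)) :
    ∀ i, b i = b' i :=
  unique_representation_of_transcendental_general p q hptr hq b b' hbfin hb'fin hsum
end

section
/- Let (Ω, F, P) be a probability space, γ ∈ (0,1], and let (X_j)_{j∈ℕ} be random variables with 0 < X_j < 1 almost surely such that for every finite nonempty set S ⊂ ℕ one has E(∏_{j∈S} X_j) = γ^{|S|}. Then for every k ≥ 1, E( Σ_{i=1}^{k} X_i ∏_{j=1}^{i−1} (1 − X_j) ) = 1 − (1 − γ)^k. -/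
/-!
Pointwise, the stick-breaking sum telescopes to `1 - ∏_{j ≤ k} (1 - X_j)`. Expanding the product
over subsets `T ⊆ {1, …, k}` and integrating term by term turns each `∏_{j ∈ T} X_j` into
`γ ^ |T|`, and the binomial theorem reassembles the result into `(1 - γ) ^ k`. Integrability of
each product comes for free, since its integral `γ ^ |T|` is nonzero.
-/

open MeasureTheory Finset

theorem Finset.sum_Icc_mul_prod_one_sub {R : Type*} [CommRing R] (f : ℕ → R) (k : ℕ) :
    ∑ i ∈ Icc 1 k, f i * ∏ j ∈ Icc 1 (i - 1), (1 - f j) = 1 - ∏ j ∈ Icc 1 k, (1 - f j) := by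
  rw [prod_one_sub_ordered, sub_sub_cancel]
  refine sum_congr rfl fun i hi => ?_
  congr 2
  ext j
  simp only [mem_Icc, mem_filter] at hi ⊢
  omega

theorem Finset.prod_one_sub_eq_sum_powerset {ι R : Type*} [CommRing R] (s : Finset ι)
    (f : ι → R) : ∏ j ∈ s, (1 - f j) = ∑ T ∈ s.powerset, (-1) ^ #T * ∏ j ∈ T, f j := by
  classical
  simp only [prod_sub, prod_const_one, mul_one]

section

variable {Ω : Type*} [MeasurableSpace Ω] {μ : Measure Ω} {X : ℕ → Ω → ℝ} {c : ℝ} {s : Finset ℕ}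

theorem integrable_prod_of_integral_prod_eq_pow (hc : c ≠ 0)
    (h : ∀ T ⊆ s, ∫ ω, ∏ j ∈ T, X j ω ∂μ = c ^ #T) {T : Finset ℕ} (hT : T ∈ s.powerset) :
    Integrable (fun ω => ∏ j ∈ T, X j ω) μ := by
  refine Integrable.of_integral_ne_zero ?_
  rw [h T (mem_powerset.mp hT)]
  exact pow_ne_zero _ hc

theorem integrable_prod_one_sub_of_integral_prod_eq_pow (hc : c ≠ 0)
    (h : ∀ T ⊆ s, ∫ ω, ∏ j ∈ T, X j ω ∂μ = c ^ #T) :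
    Integrable (fun ω => ∏ j ∈ s, (1 - X j ω)) μ := by
  simp_rw [prod_one_sub_eq_sum_powerset]
  exact integrable_finsetSum _ fun T hT =>
    (integrable_prod_of_integral_prod_eq_pow hc h hT).const_mul _

theorem integral_prod_one_sub_of_integral_prod_eq_pow (hc : c ≠ 0)
    (h : ∀ T ⊆ s, ∫ ω, ∏ j ∈ T, X j ω ∂μ = c ^ #T) :
    ∫ ω, ∏ j ∈ s, (1 - X j ω) ∂μ = (1 - c) ^ #s := calc
  ∫ ω, ∏ j ∈ s, (1 - X j ω) ∂μ = ∑ T ∈ s.powerset, (-1) ^ #T * c ^ #T := by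
    simp_rw [prod_one_sub_eq_sum_powerset]
    rw [integral_finsetSum _ fun T hT =>
      (integrable_prod_of_integral_prod_eq_pow hc h hT).const_mul _]
    refine sum_congr rfl fun T hT => ?_
    rw [integral_const_mul, h T (mem_powerset.mp hT)]
  _ = ∏ _j ∈ s, (1 - c) := by simp only [prod_one_sub_eq_sum_powerset s fun _ => c, prod_const]
  _ = (1 - c) ^ #s := prod_const _

end

theorem stick_breaking_mean_general
    {Ω : Type*} [MeasurableSpace Ω] (P : Measure Ω) [IsProbabilityMeasure P]
    (γ : ℝ) (hγ0 : 0 < γ)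
    (X : ℕ → Ω → ℝ)
    (hprod : ∀ S : Finset ℕ, S.Nonempty → (∀ j ∈ S, 1 ≤ j) →
      ∫ ω, ∏ j ∈ S, X j ω ∂P = γ ^ S.card) :
    ∀ k, 1 ≤ k →
      ∫ ω, ∑ i ∈ Finset.Icc 1 k, X i ω * ∏ j ∈ Finset.Icc 1 (i - 1), (1 - X j ω) ∂P
        = 1 - (1 - γ) ^ k := by
  intro k _
  have hsub : ∀ T ⊆ Icc 1 k, ∫ ω, ∏ j ∈ T, X j ω ∂P = γ ^ #T := by
    intro T hT
    rcases T.eq_empty_or_nonempty with rfl | hne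
    · simp
    · exact hprod T hne fun j hj => (mem_Icc.mp (hT hj)).1
  simp_rw [sum_Icc_mul_prod_one_sub]
  rw [integral_sub (integrable_const 1)
      (integrable_prod_one_sub_of_integral_prod_eq_pow hγ0.ne' hsub),
    integral_prod_one_sub_of_integral_prod_eq_pow hγ0.ne' hsub, Nat.card_Icc,
    Nat.add_sub_cancel, integral_const, probReal_univ, one_smul]

/-- If `(X_j)_{j≥1}` are `(0,1)`-valued random variables whose products over
distinct indices have factorizing expectations `E(∏_{j∈S} X_j) = γ^{|S|}` with common mean
`γ ∈ (0,1]`, then the stick-breaking sum after `k` steps has mean `1 - (1-γ)^k`. -/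
theorem stick_breaking_mean
    {Ω : Type*} [MeasurableSpace Ω] (P : Measure Ω) [IsProbabilityMeasure P]
    (γ : ℝ) (hγ0 : 0 < γ) (hγ1 : γ ≤ 1)
    (X : ℕ → Ω → ℝ) (hmeas : ∀ j, Measurable (X j))
    (hrange : ∀ j, 1 ≤ j → ∀ᵐ ω ∂P, 0 < X j ω ∧ X j ω < 1)
    (hprod : ∀ S : Finset ℕ, S.Nonempty → (∀ j ∈ S, 1 ≤ j) →
      ∫ ω, ∏ j ∈ S, X j ω ∂P = γ ^ S.card) :
    ∀ k, 1 ≤ k →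
      ∫ ω, ∑ i ∈ Finset.Icc 1 k, X i ω * ∏ j ∈ Finset.Icc 1 (i - 1), (1 - X j ω) ∂P
        = 1 - (1 - γ) ^ k :=
  stick_breaking_mean_general P γ hγ0 X hprod
end

section
/- Let (Ω, F, P) be a probability space, X a random variable with values in [0,1], and (K_i)_{i∈ℕ} random variables with values in {0,1} such that for every finite set S ⊂ ℕ and every bounded Borel measurable h : [0,1] → ℝ one has E( h(X) ∏_{i∈S} K_i ) = E( h(X) X^{|S|} ). Then n^{−1} Σ_{i=1}^{n} K_i converges to X almost surely as n → ∞. -/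
/-!
Put `Y i = K i - X`. The moment identity with `h = 1` and with `h` the identity clamped to
`[0, 1]` gives `E[K i K j] = E[X K i] = E[X²]` for `i ≠ j`, so the `Y i` are orthogonal in `L²`
with `E[Y i²] ≤ 1`. Hence `E[(∑_{i<m} Y i / m)²] ≤ 1 / m`, which is summable along `m = n²`, so
`∑_{i<n²} Y i / n² → 0` almost surely. Since the partial sums of the nonnegative `K i` are
monotone, convergence of their averages along the squares gives convergence along all `n`.
-/

open MeasureTheory Filter Finset Topology

theorem tendsto_div_of_monotone_of_tendsto_div_sq {u : ℕ → ℝ} {l : ℝ} (hu : Monotone u)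
    (h : Tendsto (fun n => u (n ^ 2) / ((n ^ 2 : ℕ) : ℝ)) atTop (𝓝 l)) :
    Tendsto (fun n => u n / n) atTop (𝓝 l) := by
  refine tendsto_div_of_monotone_of_exists_subseq_tendsto_div u l hu fun a ha =>
    ⟨fun n => n ^ 2, ?_, tendsto_pow_atTop two_ne_zero, h⟩
  have hratio : Tendsto (fun n : ℕ => (1 + 1 / (n : ℝ)) ^ 2) atTop (𝓝 1) := by
    simpa using (tendsto_one_div_atTop_nhds_zero_nat.const_add (1 : ℝ)).pow 2
  filter_upwards [hratio.eventually (gt_mem_nhds ha), eventually_ge_atTop 1] with n hn hn1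
  have hn0 : (n : ℝ) ≠ 0 := by positivity
  calc (((n + 1) ^ 2 : ℕ) : ℝ) = (1 + 1 / (n : ℝ)) ^ 2 * ((n ^ 2 : ℕ) : ℝ) := by
        push_cast; field_simp
    _ ≤ a * ((n ^ 2 : ℕ) : ℝ) := by gcongr

section
variable {Ω : Type*} [MeasurableSpace Ω] {μ : Measure Ω}

theorem ae_tendsto_zero_of_summable_integral_sq {f : ℕ → Ω → ℝ} (hf : ∀ n, MemLp (f n) 2 μ)
    (hsum : Summable fun n => ∫ ω, f n ω ^ 2 ∂μ) :
    ∀ᵐ ω ∂μ, Tendsto (fun n => f n ω) atTop (𝓝 0) := by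
  have hnorm : ∀ n, eLpNorm (fun ω => f n ω ^ 2) 1 μ = ENNReal.ofReal (∫ ω, f n ω ^ 2 ∂μ) := by
    intro n
    rw [eLpNorm_one_eq_lintegral_enorm,
      ← ofReal_integral_norm_eq_lintegral_enorm (hf n).integrable_sq]
    simp only [norm_pow, Real.norm_eq_abs, sq_abs]
  have hfin : ∑' n, eLpNorm (fun ω => f n ω ^ 2) 1 μ ≠ ⊤ := by
    simp only [hnorm]
    rw [← ENNReal.ofReal_tsum_of_nonneg (fun n => integral_nonneg fun ω => sq_nonneg _) hsum]
    exact ENNReal.ofReal_ne_top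
  filter_upwards [summable_norm_of_tsum_eLpNorm_ne_top le_rfl
    (fun n => (hf n).integrable_sq.aestronglyMeasurable) hfin] with ω hω
  have hsq : Tendsto (fun n => f n ω ^ 2) atTop (𝓝 0) :=
    tendsto_zero_iff_norm_tendsto_zero.2 hω.tendsto_atTop_zero
  have habs := (Real.continuous_sqrt.tendsto 0).comp hsq
  simp only [Function.comp_def, Real.sqrt_sq_eq_abs, Real.sqrt_zero] at habs
  exact (tendsto_zero_iff_abs_tendsto_zero _).2 habs

theorem integral_sum_sq_of_pairwise_integral_mul_eq_zero {ι : Type*} {Y : ι → Ω → ℝ}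
    (hY : ∀ i, MemLp (Y i) 2 μ) (horth : Pairwise fun i j => ∫ ω, Y i ω * Y j ω ∂μ = 0)
    (s : Finset ι) : ∫ ω, (∑ i ∈ s, Y i ω) ^ 2 ∂μ = ∑ i ∈ s, ∫ ω, Y i ω ^ 2 ∂μ := by
  have hint : ∀ i j, Integrable (fun ω => Y i ω * Y j ω) μ := fun i j =>
    (hY i).integrable_mul (hY j)
  simp_rw [sq, sum_mul_sum]
  rw [integral_finsetSum _ fun i _ => integrable_finsetSum _ fun j _ => hint i j]
  refine sum_congr rfl fun i hi => ?_
  rw [integral_finsetSum _ fun j _ => hint i j]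
  exact sum_eq_single_of_mem i hi fun j _ hji => horth hji.symm

theorem integral_sq_sum_range_div_le {Y : ℕ → Ω → ℝ} (hY : ∀ i, MemLp (Y i) 2 μ)
    (horth : Pairwise fun i j => ∫ ω, Y i ω * Y j ω ∂μ = 0) {C : ℝ}
    (hC : ∀ i, ∫ ω, Y i ω ^ 2 ∂μ ≤ C) (m : ℕ) :
    ∫ ω, ((∑ i ∈ range m, Y i ω) / m) ^ 2 ∂μ ≤ C / m := by
  simp_rw [div_pow]
  rw [integral_div, integral_sum_sq_of_pairwise_integral_mul_eq_zero hY horth]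
  calc (∑ i ∈ range m, ∫ ω, Y i ω ^ 2 ∂μ) / (m : ℝ) ^ 2 ≤ (m * C) / (m : ℝ) ^ 2 := by
        gcongr
        simpa using sum_le_card_nsmul (range m) _ C fun i _ => hC i
    _ = C / m := by
        rcases eq_or_ne (m : ℝ) 0 with hm | hm
        · simp [hm]
        · field_simp

theorem ae_tendsto_sum_range_sq_div_of_pairwise_integral_mul_eq_zero {Y : ℕ → Ω → ℝ}
    (hY : ∀ i, MemLp (Y i) 2 μ) (horth : Pairwise fun i j => ∫ ω, Y i ω * Y j ω ∂μ = 0) {C : ℝ}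
    (hC : ∀ i, ∫ ω, Y i ω ^ 2 ∂μ ≤ C) :
    ∀ᵐ ω ∂μ,
      Tendsto (fun n => (∑ i ∈ range (n ^ 2), Y i ω) / ((n ^ 2 : ℕ) : ℝ)) atTop (𝓝 0) := by
  refine ae_tendsto_zero_of_summable_integral_sq
    (fun n => by simpa only [div_eq_mul_inv] using
      (memLp_finsetSum _ fun i _ => hY i).mul_const _) ?_
  have hsum : Summable fun n : ℕ => C / ((n ^ 2 : ℕ) : ℝ) := by
    simpa [div_eq_mul_inv] using (Real.summable_one_div_nat_pow.2 one_lt_two).mul_left C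
  exact hsum.of_nonneg_of_le (fun n => integral_nonneg fun ω => sq_nonneg _)
    fun n => integral_sq_sum_range_div_le hY horth hC _
end

section
variable {Ω : Type*} [MeasurableSpace Ω] {P : Measure Ω} [IsFiniteMeasure P]
  {X : Ω → ℝ} {K : ℕ → Ω → ℝ}

theorem memLp_of_forall_abs_le_one {f : Ω → ℝ} (hf : Measurable f) (hbound : ∀ ω, |f ω| ≤ 1)
    (p : ENNReal) : MemLp f p P :=
  MemLp.of_bound hf.aestronglyMeasurable 1 (ae_of_all _ hbound)

theorem integral_sub_mul_sub_eq_zero (hXmeas : Measurable X)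
    (hXrange : ∀ ω, X ω ∈ Set.Icc (0 : ℝ) 1) (hKmeas : ∀ i, Measurable (K i))
    (hK : ∀ i ω, K i ω ∈ Set.Icc (0 : ℝ) 1)
    (hexch : ∀ S : Finset ℕ, ∀ h : ℝ → ℝ, Measurable h → (∃ c : ℝ, ∀ y, |h y| ≤ c) →
      ∫ ω, h (X ω) * ∏ i ∈ S, K i ω ∂P = ∫ ω, h (X ω) * (X ω) ^ S.card ∂P)
    {i j : ℕ} (hij : i ≠ j) :
    ∫ ω, (K i ω - X ω) * (K j ω - X ω) ∂P = 0 := by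
  have hXL2 : MemLp X 2 P := memLp_of_forall_abs_le_one hXmeas
    (fun ω => abs_le.2 ⟨by linarith [(hXrange ω).1], (hXrange ω).2⟩) 2
  have hKL2 : ∀ k, MemLp (K k) 2 P := fun k => memLp_of_forall_abs_le_one (hKmeas k)
    (fun ω => abs_le.2 ⟨by linarith [(hK k ω).1], (hK k ω).2⟩) 2
  have hKK : ∫ ω, K i ω * K j ω ∂P = ∫ ω, X ω ^ 2 ∂P := by
    simpa [prod_pair hij, card_pair hij] using
      hexch {i, j} (fun _ => 1) measurable_const ⟨1, fun _ => by simp⟩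
  have hXK : ∀ k, ∫ ω, X ω * K k ω ∂P = ∫ ω, X ω ^ 2 ∂P := by
    intro k
    have hclamp : ∀ ω, max 0 (min (X ω) 1) = X ω := fun ω => by
      rw [min_eq_left (hXrange ω).2, max_eq_right (hXrange ω).1]
    simpa [hclamp, sq] using hexch {k} (fun y => max 0 (min y 1))
      (measurable_const.max (measurable_id.min measurable_const))
      ⟨1, fun y => abs_le.2 ⟨by simp, by simp⟩⟩
  have hexpand : ∀ ω, (K i ω - X ω) * (K j ω - X ω)
      = (K i ω * K j ω - X ω * K j ω) - (X ω * K i ω - X ω ^ 2) := fun ω => by ring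
  have hiKK : Integrable (fun ω => K i ω * K j ω) P := (hKL2 i).integrable_mul (hKL2 j)
  have hiXK : ∀ k, Integrable (fun ω => X ω * K k ω) P := fun k => hXL2.integrable_mul (hKL2 k)
  have hiL : Integrable (fun ω => K i ω * K j ω - X ω * K j ω) P := hiKK.sub (hiXK j)
  have hiR : Integrable (fun ω => X ω * K i ω - X ω ^ 2) P := (hiXK i).sub hXL2.integrable_sq
  simp_rw [hexpand]
  rw [integral_sub hiL hiR,
    integral_sub hiKK (hiXK j), integral_sub (hiXK i) hXL2.integrable_sq, hKK, hXK, hXK]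
  ring
end

/-- strong law of large numbers for exchangeable(X) indicators.  If the
`{0,1}`-valued random variables `(K_i)` satisfy `E(h(X) ∏_{i∈S} K_i) = E(h(X) X^{|S|})`
for every finite `S` and every bounded Borel measurable `h`, then the empirical mean
`n⁻¹ ∑_{i=1}^n K_i` converges almost surely to `X` (indicators indexed by `i : ℕ`). -/
theorem exchangeable_indicators_lln
    {Ω : Type*} [MeasurableSpace Ω] (P : Measure Ω) [IsProbabilityMeasure P]
    (X : Ω → ℝ) (hXmeas : Measurable X) (hXrange : ∀ ω, X ω ∈ Set.Icc (0 : ℝ) 1)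
    (K : ℕ → Ω → ℝ) (hKmeas : ∀ i, Measurable (K i))
    (hK01 : ∀ i ω, K i ω = 0 ∨ K i ω = 1)
    (hexch : ∀ S : Finset ℕ, ∀ h : ℝ → ℝ, Measurable h → (∃ c : ℝ, ∀ y, |h y| ≤ c) →
      ∫ ω, h (X ω) * ∏ i ∈ S, K i ω ∂P = ∫ ω, h (X ω) * (X ω) ^ S.card ∂P) :
    ∀ᵐ ω ∂P, Tendsto (fun n : ℕ => (∑ i ∈ Finset.range n, K i ω) / n) atTop (nhds (X ω)) := by
  have hK : ∀ i ω, K i ω ∈ Set.Icc (0 : ℝ) 1 := fun i ω => by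
    rcases hK01 i ω with h | h <;> simp [h]
  have hdev : ∀ i ω, |K i ω - X ω| ≤ 1 := fun i ω =>
    abs_sub_le_of_nonneg_of_le (hK i ω).1 (hK i ω).2 (hXrange ω).1 (hXrange ω).2
  have hY : ∀ i, MemLp (fun ω => K i ω - X ω) 2 P := fun i =>
    memLp_of_forall_abs_le_one ((hKmeas i).sub hXmeas) (hdev i) 2
  have hvar : ∀ i, ∫ ω, (K i ω - X ω) ^ 2 ∂P ≤ 1 := fun i => by
    simpa using integral_mono (hY i).integrable_sq (integrable_const 1)
      fun ω => (sq_le_one_iff_abs_le_one _).2 (hdev i ω)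
  filter_upwards [ae_tendsto_sum_range_sq_div_of_pairwise_integral_mul_eq_zero hY
    (fun i j hij => integral_sub_mul_sub_eq_zero hXmeas hXrange hKmeas hK hexch hij) hvar]
    with ω hω
  have hmono : Monotone fun n => ∑ i ∈ range n, K i ω :=
    monotone_nat_of_le_succ fun n => by simpa [sum_range_succ] using (hK n ω).1
  refine tendsto_div_of_monotone_of_tendsto_div_sq hmono
    ((zero_add (X ω) ▸ hω.add_const (X ω)).congr' ?_)
  filter_upwards [eventually_ne_atTop 0] with n hn
  rw [sum_sub_distrib, sum_const, card_range, nsmul_eq_mul, sub_div,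
    mul_div_cancel_left₀ _ (by positivity), sub_add_cancel]
end

section
/- Let (Ω, F, P) be a probability space. Let X, Y be random variables with values in [0,1] and (K_i)_{i∈ℕ}, (L_i)_{i∈ℕ} random variables with values in {0,1} such that: (a) for every finite set S ⊂ ℕ and every bounded Borel measurable h : [0,1] → ℝ, E( h(X) ∏_{i∈S} K_i ) = E( h(X) X^{|S|} ) and E( h(Y) ∏_{i∈S} L_i ) = E( h(Y) Y^{|S|} ); (b) the family (X, (K_i)_{i∈ℕ}) is independent of the family (Y, (L_i)_{i∈ℕ}). Then X and Y are independent, and for every finite set S ⊂ ℕ and every bounded Borel measurable h : [0,1] → ℝ, E( h(XY) ∏_{i∈S} K_i L_i ) = E( h(XY) (XY)^{|S|} ). -/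
open MeasureTheory ProbabilityTheory

/-- products of independent exchangeable indicators.  If `(K_i)` are
exchangeable(X) indicators, `(L_i)` are exchangeable(Y) indicators, and the family
`(X, (K_i))` is independent of `(Y, (L_i))`, then `X` and `Y` are independent and
`(K_i L_i)` are exchangeable(XY) indicators. -/
theorem exchangeable_indicators_product
    {Ω : Type*} [MeasurableSpace Ω] (P : Measure Ω) [IsProbabilityMeasure P]
    (X Y : Ω → ℝ) (hXmeas : Measurable X) (hYmeas : Measurable Y)
    (hXrange : ∀ ω, X ω ∈ Set.Icc (0 : ℝ) 1) (hYrange : ∀ ω, Y ω ∈ Set.Icc (0 : ℝ) 1)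
    (K L : ℕ → Ω → ℝ) (hKmeas : ∀ i, Measurable (K i)) (hLmeas : ∀ i, Measurable (L i))
    (hK01 : ∀ i ω, K i ω = 0 ∨ K i ω = 1) (hL01 : ∀ i ω, L i ω = 0 ∨ L i ω = 1)
    (hKexch : ∀ S : Finset ℕ, ∀ h : ℝ → ℝ, Measurable h → (∃ c : ℝ, ∀ y, |h y| ≤ c) →
      ∫ ω, h (X ω) * ∏ i ∈ S, K i ω ∂P = ∫ ω, h (X ω) * (X ω) ^ S.card ∂P)
    (hLexch : ∀ S : Finset ℕ, ∀ h : ℝ → ℝ, Measurable h → (∃ c : ℝ, ∀ y, |h y| ≤ c) →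
      ∫ ω, h (Y ω) * ∏ i ∈ S, L i ω ∂P = ∫ ω, h (Y ω) * (Y ω) ^ S.card ∂P)
    (hfam : IndepFun (fun ω => (X ω, fun i => K i ω) : Ω → ℝ × (ℕ → ℝ))
                     (fun ω => (Y ω, fun i => L i ω) : Ω → ℝ × (ℕ → ℝ)) P) :
    IndepFun X Y P ∧
    ∀ S : Finset ℕ, ∀ h : ℝ → ℝ, Measurable h → (∃ c : ℝ, ∀ y, |h y| ≤ c) →
      ∫ ω, h (X ω * Y ω) * ∏ i ∈ S, K i ω * L i ω ∂P
        = ∫ ω, h (X ω * Y ω) * (X ω * Y ω) ^ S.card ∂P := by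
  classical
  -- truncation
  set τ : ℝ → ℝ := fun t => min 1 (max 0 t) with hτdef
  have hτmeas : Measurable τ := measurable_const.min (measurable_const.max measurable_id)
  have hτ0 : ∀ t, 0 ≤ τ t := fun t => le_min zero_le_one (le_max_left 0 t)
  have hτ1 : ∀ t, τ t ≤ 1 := fun t => min_le_left _ _
  have hτfix : ∀ t, t ∈ Set.Icc (0:ℝ) 1 → τ t = t := by
    intro t ht
    simp only [hτdef]
    rw [max_eq_right ht.1, min_eq_right ht.2]
  have hτX : ∀ ω, τ (X ω) = X ω := fun ω => hτfix _ (hXrange ω)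
  have hτY : ∀ ω, τ (Y ω) = Y ω := fun ω => hτfix _ (hYrange ω)
  have hτK : ∀ i ω, τ (K i ω) = K i ω := by
    intro i ω
    rcases hK01 i ω with h0 | h0 <;> rw [h0] <;>
      exact hτfix _ ⟨by norm_num, by norm_num⟩
  have hτL : ∀ i ω, τ (L i ω) = L i ω := by
    intro i ω
    rcases hL01 i ω with h0 | h0 <;> rw [h0] <;>
      exact hτfix _ ⟨by norm_num, by norm_num⟩
  set V : Ω → ℝ × (ℕ → ℝ) := fun ω => (X ω, fun i => K i ω) with hVdef
  set W : Ω → ℝ × (ℕ → ℝ) := fun ω => (Y ω, fun i => L i ω) with hWdef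
  have hVmeas : Measurable V := hXmeas.prodMk (measurable_pi_lambda _ fun i => hKmeas i)
  have hWmeas : Measurable W := hYmeas.prodMk (measurable_pi_lambda _ fun i => hLmeas i)
  refine ⟨hfam.comp measurable_fst measurable_fst, ?_⟩
  intro S h hmeas hbd
  obtain ⟨c, hc⟩ := hbd
  have hc0 : (0:ℝ) ≤ c := (abs_nonneg _).trans (hc 0)
  set n := S.card with hn
  set μ : Measure (ℝ × (ℕ → ℝ)) := P.map V with hμdef
  set ν : Measure (ℝ × (ℕ → ℝ)) := P.map W with hνdef
  haveI : IsProbabilityMeasure μ := Measure.isProbabilityMeasure_map hVmeas.aemeasurable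
  haveI : IsProbabilityMeasure ν := Measure.isProbabilityMeasure_map hWmeas.aemeasurable
  have hmap : P.map (fun ω => (V ω, W ω)) = μ.prod ν :=
    (indepFun_iff_map_prod_eq_prod_map_map hVmeas.aemeasurable hWmeas.aemeasurable).mp hfam
  -- the key auxiliary function
  set g : ℝ → ℝ := fun x => ∫ w, h (τ x * τ w.1) * (τ w.1) ^ n ∂ν with hgdef
  have hφmeas : Measurable (fun z : ℝ × (ℝ × (ℕ → ℝ)) => h (τ z.1 * τ z.2.1) * (τ z.2.1) ^ n) :=
    (hmeas.comp ((hτmeas.comp measurable_fst).mul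
      (hτmeas.comp (measurable_fst.comp measurable_snd)))).mul
      ((hτmeas.comp (measurable_fst.comp measurable_snd)).pow_const n)
  have hgmeas : Measurable g :=
    (hφmeas.stronglyMeasurable.integral_prod_right').measurable
  have hgbd : ∀ x, |g x| ≤ c := by
    intro x
    have : ‖∫ w, h (τ x * τ w.1) * (τ w.1) ^ n ∂ν‖ ≤ c := by
      refine (norm_integral_le_of_norm_le (integrable_const c) (Filter.Eventually.of_forall fun w => ?_)).trans_eq (by simp)
      rw [Real.norm_eq_abs, abs_mul]
      calc |h (τ x * τ w.1)| * |(τ w.1) ^ n| ≤ c * 1 := by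
            refine mul_le_mul (hc _) ?_ (abs_nonneg _) hc0
            rw [abs_pow]
            exact pow_le_one₀ (abs_nonneg _) (by rw [abs_of_nonneg (hτ0 _)]; exact hτ1 _)
        _ = c := mul_one c
    simpa [Real.norm_eq_abs] using this
  -- key identity: inner integral over ν
  have hkey : ∀ x : ℝ, ∫ w, h (τ x * τ w.1) * ∏ i ∈ S, τ (w.2 i) ∂ν = g x := by
    intro x
    have m1 : Measurable (fun w : ℝ × (ℕ → ℝ) => h (τ x * τ w.1) * ∏ i ∈ S, τ (w.2 i)) :=
      (hmeas.comp (measurable_const.mul (hτmeas.comp measurable_fst))).mul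
        (Finset.measurable_prod S fun i _ => hτmeas.comp ((measurable_pi_apply i).comp measurable_snd))
    have m2 : Measurable (fun w : ℝ × (ℕ → ℝ) => h (τ x * τ w.1) * (τ w.1) ^ n) :=
      (hmeas.comp (measurable_const.mul (hτmeas.comp measurable_fst))).mul
        ((hτmeas.comp measurable_fst).pow_const n)
    have hgx : g x = ∫ w, h (τ x * τ w.1) * (τ w.1) ^ n ∂ν := rfl
    rw [hgx, hνdef, integral_map hWmeas.aemeasurable m1.aestronglyMeasurable,
      integral_map hWmeas.aemeasurable m2.aestronglyMeasurable]
    simp only [hWdef, hτY, hτL]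
    exact hLexch S (fun y => h (τ x * y)) (hmeas.comp (measurable_const.mul measurable_id))
      ⟨c, fun y => hc _⟩
  -- product measurable functions
  set F : (ℝ × (ℕ → ℝ)) × (ℝ × (ℕ → ℝ)) → ℝ :=
    fun z => h (τ z.1.1 * τ z.2.1) * ∏ i ∈ S, τ (z.1.2 i) * τ (z.2.2 i) with hFdef
  set G : (ℝ × (ℕ → ℝ)) × (ℝ × (ℕ → ℝ)) → ℝ :=
    fun z => h (τ z.1.1 * τ z.2.1) * (τ z.1.1 * τ z.2.1) ^ n with hGdef
  have hhead : Measurable (fun z : (ℝ × (ℕ → ℝ)) × (ℝ × (ℕ → ℝ)) => τ z.1.1 * τ z.2.1) :=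
    (hτmeas.comp (measurable_fst.comp measurable_fst)).mul
      (hτmeas.comp (measurable_fst.comp measurable_snd))
  have hFmeas : Measurable F :=
    (hmeas.comp hhead).mul (Finset.measurable_prod S fun i _ =>
      (hτmeas.comp ((measurable_pi_apply i).comp (measurable_snd.comp measurable_fst))).mul
        (hτmeas.comp ((measurable_pi_apply i).comp (measurable_snd.comp measurable_snd))))
  have hGmeas : Measurable G := (hmeas.comp hhead).mul (hhead.pow_const n)
  have hFbd : ∀ z, ‖F z‖ ≤ c := by
    intro z
    rw [Real.norm_eq_abs, hFdef, abs_mul]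
    calc |h (τ z.1.1 * τ z.2.1)| * |∏ i ∈ S, τ (z.1.2 i) * τ (z.2.2 i)| ≤ c * 1 := by
          refine mul_le_mul (hc _) ?_ (abs_nonneg _) hc0
          rw [abs_of_nonneg (Finset.prod_nonneg fun i _ => mul_nonneg (hτ0 _) (hτ0 _))]
          exact Finset.prod_le_one (fun i _ => mul_nonneg (hτ0 _) (hτ0 _))
            (fun i _ => mul_le_one₀ (hτ1 _) (hτ0 _) (hτ1 _))
      _ = c := mul_one c
  have hGbd : ∀ z, ‖G z‖ ≤ c := by
    intro z
    rw [Real.norm_eq_abs, hGdef, abs_mul]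
    calc |h (τ z.1.1 * τ z.2.1)| * |(τ z.1.1 * τ z.2.1) ^ n| ≤ c * 1 := by
          refine mul_le_mul (hc _) ?_ (abs_nonneg _) hc0
          rw [abs_pow]
          refine pow_le_one₀ (abs_nonneg _) ?_
          rw [abs_mul]
          exact mul_le_one₀ (by rw [abs_of_nonneg (hτ0 _)]; exact hτ1 _) (abs_nonneg _)
            (by rw [abs_of_nonneg (hτ0 _)]; exact hτ1 _)
      _ = c := mul_one c
  have hFint : Integrable F (μ.prod ν) :=
    Integrable.mono' (integrable_const c) hFmeas.aestronglyMeasurable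
      (Filter.Eventually.of_forall hFbd)
  have hGint : Integrable G (μ.prod ν) :=
    Integrable.mono' (integrable_const c) hGmeas.aestronglyMeasurable
      (Filter.Eventually.of_forall hGbd)
  have hpairmeas : Measurable (fun ω => (V ω, W ω)) := hVmeas.prodMk hWmeas
  -- LHS chain
  have hL1 : ∫ ω, h (X ω * Y ω) * ∏ i ∈ S, K i ω * L i ω ∂P = ∫ z, F z ∂(μ.prod ν) := by
    rw [← hmap, integral_map hpairmeas.aemeasurable hFmeas.aestronglyMeasurable]
    refine integral_congr_ae (Filter.Eventually.of_forall fun ω => ?_)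
    simp only [hFdef, hVdef, hWdef, hτX, hτY, hτK, hτL]
  have hL2 : ∫ z, F z ∂(μ.prod ν) = ∫ v, (∏ i ∈ S, τ (v.2 i)) * g v.1 ∂μ := by
    rw [integral_prod F hFint]
    refine integral_congr_ae (Filter.Eventually.of_forall fun v => ?_)
    have : ∀ w : ℝ × (ℕ → ℝ), F (v, w)
        = (∏ i ∈ S, τ (v.2 i)) * (h (τ v.1 * τ w.1) * ∏ i ∈ S, τ (w.2 i)) := by
      intro w
      simp only [hFdef, Finset.prod_mul_distrib]
      ring
    simp only [this]
    rw [integral_const_mul, hkey v.1]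
  have hL3 : ∫ v, (∏ i ∈ S, τ (v.2 i)) * g v.1 ∂μ = ∫ ω, g (X ω) * ∏ i ∈ S, K i ω ∂P := by
    have m : Measurable (fun v : ℝ × (ℕ → ℝ) => (∏ i ∈ S, τ (v.2 i)) * g v.1) :=
      (Finset.measurable_prod S fun i _ =>
        hτmeas.comp ((measurable_pi_apply i).comp measurable_snd)).mul
        (hgmeas.comp measurable_fst)
    rw [hμdef, integral_map hVmeas.aemeasurable m.aestronglyMeasurable]
    refine integral_congr_ae (Filter.Eventually.of_forall fun ω => ?_)
    simp only [hVdef, hτK]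
    ring
  -- RHS chain
  have hR1 : ∫ ω, h (X ω * Y ω) * (X ω * Y ω) ^ n ∂P = ∫ z, G z ∂(μ.prod ν) := by
    rw [← hmap, integral_map hpairmeas.aemeasurable hGmeas.aestronglyMeasurable]
    refine integral_congr_ae (Filter.Eventually.of_forall fun ω => ?_)
    simp only [hGdef, hVdef, hWdef, hτX, hτY]
  have hR2 : ∫ z, G z ∂(μ.prod ν) = ∫ v, (τ v.1) ^ n * g v.1 ∂μ := by
    rw [integral_prod G hGint]
    refine integral_congr_ae (Filter.Eventually.of_forall fun v => ?_)
    have : ∀ w : ℝ × (ℕ → ℝ), G (v, w)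
        = (τ v.1) ^ n * (h (τ v.1 * τ w.1) * (τ w.1) ^ n) := by
      intro w
      simp only [hGdef, mul_pow]
      ring
    simp only [this]
    rw [integral_const_mul]
  have hR3 : ∫ v, (τ v.1) ^ n * g v.1 ∂μ = ∫ ω, g (X ω) * (X ω) ^ n ∂P := by
    have m : Measurable (fun v : ℝ × (ℕ → ℝ) => (τ v.1) ^ n * g v.1) :=
      ((hτmeas.comp measurable_fst).pow_const n).mul (hgmeas.comp measurable_fst)
    rw [hμdef, integral_map hVmeas.aemeasurable m.aestronglyMeasurable]
    refine integral_congr_ae (Filter.Eventually.of_forall fun ω => ?_)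
    simp only [hVdef, hτX]
    ring
  rw [hL1, hL2, hL3, hR1, hR2, hR3]
  exact hKexch S g hgmeas ⟨c, hgbd⟩
end

section
/- Let τ > 0 and ρ > 0, and let T₁, T₂, T₃, T'₁, T'₂ be independent real random variables, with T₁, T₂, T₃ exponentially distributed with rate τ and T'₁, T'₂ exponentially distributed with rate ρ. Then for all 0 ≤ t₀ < t₁ < t₂: P( t₀ < T₁ ≤ t₁ < T₁ + T₂ ≤ t₂ < T₁ + T₂ + T₃ and T₁ < T'₁ ≤ T₁ + T₂ < T'₂ ) = (τ²/ρ) e^{−τ t₂} [ ρ^{−1} ( e^{−ρ t₁} − e^{−ρ t₂} )( e^{−ρ t₀} − e^{−ρ t₁} ) − (1/2)( e^{−2ρ t₁} − e^{−2ρ t₂} )( t₁ − t₀ ) ]. -/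
/-!
Write `S₁ = T₁` and `S₂ = T₁ + T₂` for the first two jump times of the rate-`τ` process. The shear
`(s, u) ↦ (s, s + u)` preserves Lebesgue measure, so `(S₁, S₂)` has density `τ² e^{-τ S₂}` on
`0 ≤ S₁ ≤ S₂`, and it is independent of `(T₃, T₁', T₂')`. Given `(S₁, S₂)`, the remaining
constraints have probability `e^{-τ (t₂ - S₂)} (e^{-ρ S₁} - e^{-ρ S₂}) e^{-ρ S₂}`, so the
`τ`-dependence collapses to the constant `τ² e^{-τ t₂}`. The event forces `(S₁, S₂)` into the
rectangle `(t₀, t₁] × (t₁, t₂]`, where the integrand splits into products of one-variable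
exponentials.
-/

open MeasureTheory ProbabilityTheory Set Real
open scoped ENNReal

lemma expMeasure_eq_withDensity (r : ℝ) : expMeasure r = volume.withDensity (exponentialPDF r) :=
  rfl

@[fun_prop]
lemma measurable_exponentialPDF (r : ℝ) : Measurable (exponentialPDF r) :=
  (measurable_exponentialPDFReal r).ennreal_ofReal

instance (r : ℝ) : SFinite (expMeasure r) := by
  rw [expMeasure_eq_withDensity]
  infer_instance

lemma expMeasure_Ioi {r a : ℝ} (hr : 0 < r) (ha : 0 ≤ a) :
    expMeasure r (Ioi a) = ENNReal.ofReal (exp (-r * a)) := by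
  have := isProbabilityMeasure_expMeasure hr
  rw [← compl_Iic, prob_compl_eq_one_sub measurableSet_Iic, ← ofReal_cdf, cdf_expMeasure_eq hr,
    if_pos ha, ENNReal.ofReal_sub _ (exp_nonneg _), ENNReal.ofReal_one,
    ENNReal.sub_sub_cancel ENNReal.one_ne_top
      (ENNReal.ofReal_le_one.2 (exp_le_one_iff.2 (neg_nonpos.2 (mul_nonneg hr.le ha)))), neg_mul]

lemma expMeasure_Ioc {r a b : ℝ} (hr : 0 < r) (ha : 0 ≤ a) (hab : a ≤ b) :
    expMeasure r (Ioc a b) = ENNReal.ofReal (exp (-r * a) - exp (-r * b)) := by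
  have := isProbabilityMeasure_expMeasure hr
  rw [← Ioi_sdiff_Ioi, measure_sdiff (Ioi_subset_Ioi hab) measurableSet_Ioi.nullMeasurableSet
    (measure_ne_top _ _), expMeasure_Ioi hr ha, expMeasure_Ioi hr (ha.trans hab),
    ENNReal.ofReal_sub _ (exp_nonneg _)]

lemma map_eq_expMeasure_of_tail {Ω : Type*} [MeasurableSpace Ω] {P : Measure Ω}
    [IsProbabilityMeasure P] {r : ℝ} (hr : 0 < r) {T : Ω → ℝ} (hT : Measurable T)
    (htail : ∀ a, 0 ≤ a → P {ω | a < T ω} = ENNReal.ofReal (exp (-r * a))) :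
    P.map T = expMeasure r := by
  have := isProbabilityMeasure_expMeasure hr
  have := Measure.isProbabilityMeasure_map (μ := P) hT.aemeasurable
  have hIoi_of_nonneg : ∀ a, 0 ≤ a → P.map T (Ioi a) = expMeasure r (Ioi a) := fun a ha => by
    rw [Measure.map_apply hT measurableSet_Ioi, expMeasure_Ioi hr ha]
    exact htail a ha
  have hIoi : ∀ a, P.map T (Ioi a) = expMeasure r (Ioi a) := by
    intro a
    rcases le_or_gt 0 a with ha | ha
    · exact hIoi_of_nonneg a ha
    -- for `a < 0`, both measures already give full mass to `Ioi 0 ⊆ Ioi a`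
    have hfull : ∀ μ : Measure ℝ, IsProbabilityMeasure μ → μ (Ioi 0) = 1 → μ (Ioi a) = 1 :=
      fun μ _ h0 => le_antisymm prob_le_one (h0 ▸ measure_mono (Ioi_subset_Ioi ha.le))
    have h0 : expMeasure r (Ioi 0) = 1 := by simp [expMeasure_Ioi hr le_rfl]
    rw [hfull _ inferInstance h0, hfull _ inferInstance (hIoi_of_nonneg 0 le_rfl ▸ h0)]
  refine Measure.ext_of_Iic _ _ fun a => ?_
  rw [← compl_Ioi, prob_compl_eq_one_sub measurableSet_Ioi,
    prob_compl_eq_one_sub measurableSet_Ioi, hIoi]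

lemma exponentialPDF_mul_exponentialPDF_sub {r s v : ℝ} (hr : 0 ≤ r) (hs : 0 ≤ s) (hsv : s ≤ v) :
    exponentialPDF r s * exponentialPDF r (v - s) = ENNReal.ofReal (r ^ 2 * exp (-r * v)) := by
  rw [exponentialPDF_of_nonneg hs, exponentialPDF_of_nonneg (sub_nonneg.2 hsv),
    ← ENNReal.ofReal_mul (by positivity), mul_mul_mul_comm, ← exp_add]
  ring_nf

lemma map_prod_add_withDensity {G : Type*} [AddCommGroup G] [MeasurableSpace G]
    [MeasurableAdd₂ G] [MeasurableSub₂ G] {μ ν : Measure G} [SFinite μ] [SFinite ν]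
    [ν.IsAddLeftInvariant] {f g : G → ℝ≥0∞} (hf : Measurable f) (hg : Measurable g) :
    ((μ.withDensity f).prod (ν.withDensity g)).map (fun z => (z.1, z.1 + z.2))
      = (μ.prod ν).withDensity (fun z => f z.1 * g (z.2 - z.1)) := by
  have hshear := measurePreserving_prod_add μ ν
  have hF : Measurable fun z : G × G => f z.1 * g (z.2 - z.1) := by fun_prop
  ext s hs
  rw [prod_withDensity hf hg, Measure.map_apply hshear.measurable hs,
    withDensity_apply _ (hshear.measurable hs), withDensity_apply _ hs,
    ← hshear.setLIntegral_comp_preimage hs hF]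
  simp only [add_sub_cancel_left]

lemma ProbabilityTheory.IndepFun.map_prod_add_eq_withDensity {Ω : Type*} [MeasurableSpace Ω]
    {P : Measure Ω} [IsProbabilityMeasure P] {r : ℝ} {X Y : Ω → ℝ} (h : IndepFun X Y P)
    (hX : Measurable X) (hY : Measurable Y) (hlawX : P.map X = expMeasure r)
    (hlawY : P.map Y = expMeasure r) :
    P.map (fun ω => (X ω, X ω + Y ω)) =
      volume.withDensity fun p : ℝ × ℝ => exponentialPDF r p.1 * exponentialPDF r (p.2 - p.1) := by
  have hshear : Measurable fun z : ℝ × ℝ => (z.1, z.1 + z.2) := by fun_prop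
  have hcomp : (fun ω => (X ω, X ω + Y ω))
      = (fun z : ℝ × ℝ => (z.1, z.1 + z.2)) ∘ fun ω => (X ω, Y ω) := rfl
  rw [hcomp, ← Measure.map_map hshear (hX.prodMk hY),
    h.map_prod_eq_prod_map_map hX.aemeasurable hY.aemeasurable, hlawX, hlawY,
    expMeasure_eq_withDensity,
    map_prod_add_withDensity (measurable_exponentialPDF r) (measurable_exponentialPDF r),
    ← Measure.volume_eq_prod]

lemma ProbabilityTheory.iIndepFun.indepFun_pair_triple {Ω β : Type*} {_ : MeasurableSpace Ω}
    [MeasurableSpace β] {P : Measure Ω} {f : Fin 5 → Ω → β} (h : iIndepFun f P)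
    (hf : ∀ i, Measurable (f i)) :
    IndepFun (fun ω => (f 0 ω, f 1 ω)) (fun ω => (f 2 ω, f 3 ω, f 4 ω)) P :=
  (h.indepFun_finset {0, 1} {2, 3, 4} (by decide) hf).comp
    (φ := fun v : ({0, 1} : Finset (Fin 5)) → β => (v ⟨0, by decide⟩, v ⟨1, by decide⟩))
    (ψ := fun v : ({2, 3, 4} : Finset (Fin 5)) → β =>
      (v ⟨2, by decide⟩, v ⟨3, by decide⟩, v ⟨4, by decide⟩))
    (by fun_prop) (by fun_prop)

lemma MeasureTheory.Measure.prod_prod_univ_inter_apply {α β : Type*} [MeasurableSpace α]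
    [MeasurableSpace β] {μ : Measure α} {ν : Measure β} [SFinite μ] [SFinite ν] (s : Set α)
    {t : Set (α × β)} (ht : MeasurableSet t) :
    μ.prod ν (s ×ˢ univ ∩ t) = ∫⁻ x in s, ν (Prod.mk x ⁻¹' t) ∂μ := by
  rw [inter_comm, ← Measure.restrict_apply ht, ← Measure.prod_restrict, Measure.restrict_univ,
    Measure.prod_apply ht]

lemma integral_Ioc_exp_mul {c a b : ℝ} (hc : c ≠ 0) (hab : a ≤ b) :
    ∫ x in Ioc a b, exp (c * x) = (exp (c * b) - exp (c * a)) / c := by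
  rw [← intervalIntegral.integral_of_le hab,
    intervalIntegral.integral_comp_mul_left (fun x => exp x) hc, integral_exp, smul_eq_mul]
  field_simp

lemma setIntegral_Ioc_prod_Ioc_exp {ρ a b c d : ℝ} (hρ : ρ ≠ 0) (hab : a ≤ b) (hcd : c ≤ d) :
    ∫ p in Ioc a b ×ˢ Ioc c d, (exp (-ρ * p.1) - exp (-ρ * p.2)) * exp (-ρ * p.2)
      = (exp (-ρ * b) - exp (-ρ * a)) / (-ρ) * ((exp (-ρ * d) - exp (-ρ * c)) / (-ρ))
        - (b - a) * ((exp (-2 * ρ * d) - exp (-2 * ρ * c)) / (-2 * ρ)) := by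
  have hsplit : ∀ p : ℝ × ℝ, (exp (-ρ * p.1) - exp (-ρ * p.2)) * exp (-ρ * p.2)
      = exp (-ρ * p.1) * exp (-ρ * p.2) - exp (-2 * ρ * p.2) := by
    intro p
    rw [sub_mul, ← exp_add (-ρ * p.2)]
    ring_nf
  have hint : ∀ f : ℝ × ℝ → ℝ, Continuous f → IntegrableOn f (Ioc a b ×ˢ Ioc c d) := fun f hf =>
    (hf.continuousOn.integrableOn_compact (isCompact_Icc.prod isCompact_Icc)).mono_set
      (prod_mono Ioc_subset_Icc_self Ioc_subset_Icc_self)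
  simp_rw [hsplit]
  rw [integral_sub (hint _ (by fun_prop)) (hint _ (by fun_prop)), Measure.volume_eq_prod,
    setIntegral_prod_mul (fun x => exp (-ρ * x)) (fun y => exp (-ρ * y)),
    setIntegral_prod _ (by rw [← Measure.volume_eq_prod]; exact hint _ (by fun_prop))]
  dsimp only
  rw [setIntegral_const, Real.volume_real_Ioc_of_le hab,
    integral_Ioc_exp_mul (neg_ne_zero.2 hρ) hab, integral_Ioc_exp_mul (neg_ne_zero.2 hρ) hcd,
    integral_Ioc_exp_mul (by simpa using hρ) hcd, smul_eq_mul]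

/-- Points are `((S₁, S₂), (T₃, T₁', T₂'))`, where `S₁ = T₁` and `S₂ = T₁ + T₂`. -/
def waitingConstraints (t₂ : ℝ) : Set ((ℝ × ℝ) × ℝ × ℝ × ℝ) :=
  {q | t₂ < q.1.2 + q.2.1 ∧ q.1.1 < q.2.2.1 ∧ q.2.2.1 ≤ q.1.2 ∧ q.1.2 < q.2.2.2}

lemma measurableSet_waitingConstraints (t₂ : ℝ) : MeasurableSet (waitingConstraints t₂) := by
  unfold waitingConstraints
  measurability

lemma expMeasure_prod_waitingConstraints_section {τ ρ t₂ : ℝ} (hτ : 0 < τ) (hρ : 0 < ρ)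
    {p : ℝ × ℝ} (hp₁ : 0 ≤ p.1) (hp₁₂ : p.1 ≤ p.2) (hp₂ : p.2 ≤ t₂) :
    (expMeasure τ).prod ((expMeasure ρ).prod (expMeasure ρ)) (Prod.mk p ⁻¹' waitingConstraints t₂)
      = ENNReal.ofReal (exp (-τ * (t₂ - p.2))) *
          (ENNReal.ofReal (exp (-ρ * p.1) - exp (-ρ * p.2)) * ENNReal.ofReal (exp (-ρ * p.2))) := by
  have hsection :
      Prod.mk p ⁻¹' waitingConstraints t₂ = Ioi (t₂ - p.2) ×ˢ Ioc p.1 p.2 ×ˢ Ioi p.2 := by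
    ext y
    simp [waitingConstraints, sub_lt_iff_lt_add', and_assoc]
  rw [hsection, Measure.prod_prod, Measure.prod_prod, expMeasure_Ioi hτ (sub_nonneg.2 hp₂),
    expMeasure_Ioc hρ hp₁ hp₁₂, expMeasure_Ioi hρ (hp₁.trans hp₁₂)]

lemma measure_secondJumpEvent {τ ρ t₀ t₁ t₂ : ℝ} (hτ : 0 < τ) (hρ : 0 < ρ) (ht₀ : 0 ≤ t₀)
    (ht₀₁ : t₀ < t₁) (ht₁₂ : t₁ < t₂) :
    (volume.withDensity fun p : ℝ × ℝ => exponentialPDF τ p.1 * exponentialPDF τ (p.2 - p.1)).prod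
        ((expMeasure τ).prod ((expMeasure ρ).prod (expMeasure ρ)))
        ((Ioc t₀ t₁ ×ˢ Ioc t₁ t₂) ×ˢ univ ∩ waitingConstraints t₂)
      = ENNReal.ofReal
          (τ ^ 2 / ρ * exp (-τ * t₂) *
            (ρ⁻¹ * (exp (-ρ * t₁) - exp (-ρ * t₂)) * (exp (-ρ * t₀) - exp (-ρ * t₁)) -
              1 / 2 * (exp (-2 * ρ * t₁) - exp (-2 * ρ * t₂)) * (t₁ - t₀))) := by
  set R := Ioc t₀ t₁ ×ˢ Ioc t₁ t₂
  set F : ℝ × ℝ → ℝ := fun p => τ ^ 2 * exp (-τ * t₂) *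
    ((exp (-ρ * p.1) - exp (-ρ * p.2)) * exp (-ρ * p.2))
  have hR : MeasurableSet R := measurableSet_Ioc.prod measurableSet_Ioc
  have hB := measurableSet_waitingConstraints t₂
  have hexp_le : ∀ p ∈ R, exp (-ρ * p.2) ≤ exp (-ρ * p.1) := by
    rintro p ⟨⟨-, hs₁⟩, hv₁, -⟩
    exact exp_le_exp.2 (by nlinarith)
  have hintegrand : ∀ p ∈ R,
      exponentialPDF τ p.1 * exponentialPDF τ (p.2 - p.1) *
        (expMeasure τ).prod ((expMeasure ρ).prod (expMeasure ρ))
          (Prod.mk p ⁻¹' waitingConstraints t₂) = ENNReal.ofReal (F p) := by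
    intro p hp
    have hsv := hexp_le p hp
    obtain ⟨⟨hs₀, hs₁⟩, hv₁, hv₂⟩ := hp
    rw [exponentialPDF_mul_exponentialPDF_sub hτ.le (by linarith) (by linarith),
      expMeasure_prod_waitingConstraints_section hτ hρ (by linarith) (by linarith) hv₂,
      ← ENNReal.ofReal_mul (sub_nonneg.2 hsv), ← ENNReal.ofReal_mul (exp_nonneg _),
      ← ENNReal.ofReal_mul (by positivity)]
    simp only [F]
    congr 1
    rw [show -τ * t₂ = -τ * p.2 + -τ * (t₂ - p.2) by ring, exp_add]
    ring
  have hint : IntegrableOn F R :=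
    ((by fun_prop : Continuous F).continuousOn.integrableOn_compact
      (isCompact_Icc.prod isCompact_Icc)).mono_set
      (prod_mono Ioc_subset_Icc_self Ioc_subset_Icc_self)
  have hnonneg : 0 ≤ᵐ[volume.restrict R] F := by
    refine (ae_restrict_iff' hR).2 (Filter.Eventually.of_forall fun p hp => ?_)
    have := sub_nonneg.2 (hexp_le p hp)
    positivity
  rw [Measure.prod_prod_univ_inter_apply _ hB,
    setLIntegral_withDensity_eq_setLIntegral_mul _ (by fun_prop)
      (measurable_measure_prodMk_left hB) hR]
  simp only [Pi.mul_apply]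
  rw [setLIntegral_congr_fun hR hintegrand, ← ofReal_integral_eq_lintegral_ofReal hint hnonneg,
    integral_const_mul, setIntegral_Ioc_prod_Ioc_exp hρ.ne' ht₀₁.le ht₁₂.le]
  congr 1
  field_simp
  ring

/-- if `T₁, T₂, T₃` are Exp(τ) and `T₁', T₂'` are Exp(ρ), all five independent
(exponential meaning `P(T > a) = e^{-λa}` for `a ≥ 0`), then for `0 ≤ t₀ < t₁ < t₂`,
`P(t₀ < T₁ ≤ t₁ < T₁+T₂ ≤ t₂ < T₁+T₂+T₃, T₁ < T₁' ≤ T₁+T₂ < T₂')`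
`= (τ²/ρ) e^{-τt₂} [ρ⁻¹(e^{-ρt₁}-e^{-ρt₂})(e^{-ρt₀}-e^{-ρt₁}) - (1/2)(e^{-2ρt₁}-e^{-2ρt₂})(t₁-t₀)]`. -/
theorem second_jump_prob
    {Ω : Type*} [MeasurableSpace Ω] (P : Measure Ω) [IsProbabilityMeasure P]
    (τ ρ : ℝ) (hτ : 0 < τ) (hρ : 0 < ρ)
    (T₁ T₂ T₃ T₁' T₂' : Ω → ℝ)
    (hmeas₁ : Measurable T₁) (hmeas₂ : Measurable T₂) (hmeas₃ : Measurable T₃)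
    (hmeas₁' : Measurable T₁') (hmeas₂' : Measurable T₂')
    (hindep : iIndepFun ![T₁, T₂, T₃, T₁', T₂'] P)
    (hT₁ : ∀ a : ℝ, 0 ≤ a → P {ω | a < T₁ ω} = ENNReal.ofReal (Real.exp (-τ * a)))
    (hT₂ : ∀ a : ℝ, 0 ≤ a → P {ω | a < T₂ ω} = ENNReal.ofReal (Real.exp (-τ * a)))
    (hT₃ : ∀ a : ℝ, 0 ≤ a → P {ω | a < T₃ ω} = ENNReal.ofReal (Real.exp (-τ * a)))
    (hT₁' : ∀ a : ℝ, 0 ≤ a → P {ω | a < T₁' ω} = ENNReal.ofReal (Real.exp (-ρ * a)))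
    (hT₂' : ∀ a : ℝ, 0 ≤ a → P {ω | a < T₂' ω} = ENNReal.ofReal (Real.exp (-ρ * a)))
    (t₀ t₁ t₂ : ℝ) (ht₀ : 0 ≤ t₀) (ht₀₁ : t₀ < t₁) (ht₁₂ : t₁ < t₂) :
    P {ω | t₀ < T₁ ω ∧ T₁ ω ≤ t₁ ∧ t₁ < T₁ ω + T₂ ω ∧ T₁ ω + T₂ ω ≤ t₂ ∧
           t₂ < T₁ ω + T₂ ω + T₃ ω ∧ T₁ ω < T₁' ω ∧ T₁' ω ≤ T₁ ω + T₂ ω ∧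
           T₁ ω + T₂ ω < T₂' ω}
      = ENNReal.ofReal
          (τ ^ 2 / ρ * Real.exp (-τ * t₂) *
            (ρ⁻¹ * (Real.exp (-ρ * t₁) - Real.exp (-ρ * t₂)) *
                (Real.exp (-ρ * t₀) - Real.exp (-ρ * t₁)) -
              1 / 2 * (Real.exp (-2 * ρ * t₁) - Real.exp (-2 * ρ * t₂)) * (t₁ - t₀))) := by
  have hmeas : ∀ i, Measurable (![T₁, T₂, T₃, T₁', T₂'] i) := by
    intro i; fin_cases i <;> assumption
  have hS : Measurable fun ω => (T₁ ω, T₁ ω + T₂ ω) := by fun_prop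
  have hY : Measurable fun ω => (T₃ ω, T₁' ω, T₂' ω) := by fun_prop
  have h₁₂ : IndepFun T₁ T₂ P := hindep.indepFun (i := 0) (j := 1) (by decide)
  have h₁₂' : IndepFun T₁' T₂' P := hindep.indepFun (i := 3) (j := 4) (by decide)
  have hlawS := h₁₂.map_prod_add_eq_withDensity hmeas₁ hmeas₂
    (map_eq_expMeasure_of_tail hτ hmeas₁ hT₁) (map_eq_expMeasure_of_tail hτ hmeas₂ hT₂)
  have hlawY : P.map (fun ω => (T₃ ω, T₁' ω, T₂' ω))
      = (expMeasure τ).prod ((expMeasure ρ).prod (expMeasure ρ)) := by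
    rw [(hindep.indepFun_prodMk hmeas 3 4 2 (by decide) (by decide)).symm.map_prod_eq_prod_map_map
        hmeas₃.aemeasurable (hmeas₁'.prodMk hmeas₂').aemeasurable,
      h₁₂'.map_prod_eq_prod_map_map hmeas₁'.aemeasurable hmeas₂'.aemeasurable,
      map_eq_expMeasure_of_tail hτ hmeas₃ hT₃, map_eq_expMeasure_of_tail hρ hmeas₁' hT₁',
      map_eq_expMeasure_of_tail hρ hmeas₂' hT₂']
  have hSY : IndepFun (fun ω => (T₁ ω, T₁ ω + T₂ ω)) (fun ω => (T₃ ω, T₁' ω, T₂' ω)) P :=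
    (hindep.indepFun_pair_triple hmeas).comp (φ := fun z => (z.1, z.1 + z.2)) (by fun_prop)
      measurable_id
  have hevent : {ω | t₀ < T₁ ω ∧ T₁ ω ≤ t₁ ∧ t₁ < T₁ ω + T₂ ω ∧ T₁ ω + T₂ ω ≤ t₂ ∧
      t₂ < T₁ ω + T₂ ω + T₃ ω ∧ T₁ ω < T₁' ω ∧ T₁' ω ≤ T₁ ω + T₂ ω ∧ T₁ ω + T₂ ω < T₂' ω}
      = (fun ω => ((T₁ ω, T₁ ω + T₂ ω), (T₃ ω, T₁' ω, T₂' ω))) ⁻¹'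
          ((Ioc t₀ t₁ ×ˢ Ioc t₁ t₂) ×ˢ univ ∩ waitingConstraints t₂) := by
    ext ω
    simp [waitingConstraints, and_assoc]
  rw [hevent, ← Measure.map_apply (hS.prodMk hY)
      (((measurableSet_Ioc.prod measurableSet_Ioc).prod MeasurableSet.univ).inter
        (measurableSet_waitingConstraints t₂)),
    hSY.map_prod_eq_prod_map_map hS.aemeasurable hY.aemeasurable, hlawS, hlawY]
  exact measure_secondJumpEvent hτ hρ ht₀ ht₀₁ ht₁₂
end
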